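/- Let M = UΛUᵀ be symmetric with eigenvalues ordered by nonincreasing modulus, U = [U₁, U₂] with U₁ ∈ ℝ^{n×k} containing eigenvectors of the k leading eigenvalues, and suppose λ_k ≠ 0. Let X ∈ ℝ^{n×k} have orthonormal columns χ₁,…,χ_k and X_⊥ ∈ ℝ^{n×(n-k)} complete X to an orthogonal matrix. Then ‖U₁ᵀX_⊥‖_F² ≤ s² ‖M‖_F²/λ_k² − ∑_{i=1}^k ‖Mχᵢ − (χᵢᵀMχᵢ)χᵢ‖₂²/λ_k², where s = ‖M − H‖_F/‖M‖_F and H = ∑ᵢ (χᵢᵀMχᵢ)χᵢχᵢᵀ. -/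

import Mathlib

/-!
Since `H = X diag(q) Xᵀ`, the residual `M - H` sends `χᵢ` to `Mχᵢ - qᵢχᵢ` and agrees with `M` on
the columns of `X⊥`, so splitting `‖M - H‖_F²` along the orthogonal matrix `[X, X⊥]` gives
`s²‖M‖_F² = ∑ᵢ ‖Mχᵢ - qᵢχᵢ‖² + ‖MX⊥‖_F²`. With `W = UᵀX⊥`, `‖MX⊥‖_F² = ∑ⱼ λⱼ² ‖Wⱼ‖²`, and the
first `k` rows of `W` form `U₁ᵀX⊥` and carry weights `λⱼ² ≥ λₖ²`.
-/

open Matrix Finset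

namespace Matrix

variable {l m n o : Type*}

theorem sum_sum_sq_eq_trace_transpose_mul [Fintype m] [Fintype n] (A : Matrix m n ℝ) :
    ∑ r, ∑ c, A r c ^ 2 = (Aᵀ * A).trace := by
  simp only [trace, diag, mul_apply, transpose_apply, sq]
  exact Finset.sum_comm

theorem sum_sum_sq_orthogonal_mul [Fintype m] [Fintype n] [DecidableEq m] {U : Matrix m m ℝ}
    (hU : Uᵀ * U = 1) (A : Matrix m n ℝ) : ∑ r, ∑ c, (U * A) r c ^ 2 = ∑ r, ∑ c, A r c ^ 2 := by
  rw [sum_sum_sq_eq_trace_transpose_mul, sum_sum_sq_eq_trace_transpose_mul, transpose_mul,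
    Matrix.mul_assoc, ← Matrix.mul_assoc Uᵀ, hU, Matrix.one_mul]

theorem sum_sum_sq_eq_add_of_mul_transpose_add_mul_transpose [Fintype l] [Fintype m] [Fintype n]
    [Fintype o] [DecidableEq n] (A : Matrix m n ℝ) {X : Matrix n l ℝ} {Y : Matrix n o ℝ}
    (h : X * Xᵀ + Y * Yᵀ = 1) :
    ∑ r, ∑ c, A r c ^ 2 = ∑ r, ∑ c, (A * X) r c ^ 2 + ∑ r, ∑ c, (A * Y) r c ^ 2 := by
  have hsplit : (A * X) * (A * X)ᵀ + (A * Y) * (A * Y)ᵀ = A * (X * Xᵀ + Y * Yᵀ) * Aᵀ := by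
    simp only [transpose_mul, Matrix.mul_add, Matrix.add_mul, Matrix.mul_assoc]
  simp only [sum_sum_sq_eq_trace_transpose_mul]
  rw [trace_mul_comm (A * X)ᵀ, trace_mul_comm (A * Y)ᵀ, trace_mul_comm Aᵀ, ← trace_add, hsplit,
    h, Matrix.mul_one]

theorem sum_sum_sq_diagonal_mul [Fintype m] [Fintype n] [DecidableEq m] (d : m → ℝ)
    (A : Matrix m n ℝ) :
    ∑ r, ∑ c, (diagonal d * A) r c ^ 2 = ∑ r, d r ^ 2 * ∑ c, A r c ^ 2 := by
  simp only [diagonal_mul, mul_pow, Finset.mul_sum]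

theorem sum_sum_sq_spectral_mul [Fintype m] [Fintype n] [DecidableEq m] {U : Matrix m m ℝ}
    (hU : Uᵀ * U = 1) (d : m → ℝ) (B : Matrix m n ℝ) :
    ∑ r, ∑ c, (U * diagonal d * Uᵀ * B) r c ^ 2 = ∑ i, d i ^ 2 * ∑ c, (Uᵀ * B) i c ^ 2 := by
  rw [Matrix.mul_assoc, Matrix.mul_assoc, sum_sum_sq_orthogonal_mul hU, sum_sum_sq_diagonal_mul]

theorem sum_sum_sq_spectral [Fintype m] [DecidableEq m] {U : Matrix m m ℝ} (hU : Uᵀ * U = 1)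
    (d : m → ℝ) : ∑ r, ∑ c, (U * diagonal d * Uᵀ) r c ^ 2 = ∑ i, d i ^ 2 := by
  have hrow (i : m) : ∑ c, U c i ^ 2 = 1 := by
    simpa [mul_apply, sq] using congrFun (congrFun hU i) i
  simpa [hrow] using sum_sum_sq_spectral_mul hU d (1 : Matrix m m ℝ)

theorem sum_smul_vecMulVec_col [Fintype m] [DecidableEq m] (X : Matrix n m ℝ) (q : m → ℝ) :
    ∑ i, q i • vecMulVec (fun r => X r i) (fun r => X r i) = X * diagonal q * Xᵀ := by
  ext r c
  rw [mul_apply]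
  simp only [sum_apply, smul_apply, vecMulVec_apply, smul_eq_mul, mul_diagonal, transpose_apply]
  exact Finset.sum_congr rfl fun i _ => by ring

theorem diagonal_conj_mul_eq_zero [Fintype m] [Fintype n] [DecidableEq m] {X : Matrix n m ℝ}
    {Y : Matrix n o ℝ} (h : Xᵀ * Y = 0) (q : m → ℝ) : X * diagonal q * Xᵀ * Y = 0 := by
  rw [Matrix.mul_assoc, h, Matrix.mul_zero]

theorem sub_diagonal_conj_mul_self [Fintype m] [Fintype n] [DecidableEq m] (M : Matrix n n ℝ)
    {X : Matrix n m ℝ} (hX : Xᵀ * X = 1) (q : m → ℝ) :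
    (M - X * diagonal q * Xᵀ) * X = M * X - X * diagonal q := by
  rw [Matrix.sub_mul, Matrix.mul_assoc _ Xᵀ, hX, Matrix.mul_one]

theorem sum_sum_sq_sub_diagonal_conj [Fintype m] [Fintype n] [Fintype o] [DecidableEq m]
    [DecidableEq n] (M : Matrix n n ℝ) {X : Matrix n m ℝ} {Y : Matrix n o ℝ} (hX : Xᵀ * X = 1)
    (hXY : Xᵀ * Y = 0) (hXY1 : X * Xᵀ + Y * Yᵀ = 1) (q : m → ℝ) :
    ∑ r, ∑ c, (M - X * diagonal q * Xᵀ) r c ^ 2 =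
      ∑ i, ∑ r, ((M *ᵥ fun r' => X r' i) r - q i * X r i) ^ 2 + ∑ r, ∑ c, (M * Y) r c ^ 2 := by
  rw [sum_sum_sq_eq_add_of_mul_transpose_add_mul_transpose _ hXY1,
    sub_diagonal_conj_mul_self M hX, Matrix.sub_mul, diagonal_conj_mul_eq_zero hXY, sub_zero,
    Finset.sum_comm (γ := m)]
  simp only [Matrix.sub_apply, mul_diagonal, mul_comm (X _ _) (q _)]
  rfl

end Matrix

theorem sq_mul_sum_le_sum_sq_mul {ι : Type*} [Fintype ι] [Preorder ι] {lam w : ι → ℝ}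
    (hlam : Antitone fun i => |lam i|) (hw : 0 ≤ w) {a : ι} {s : Finset ι}
    (hs : ∀ j ∈ s, j ≤ a) : lam a ^ 2 * ∑ j ∈ s, w j ≤ ∑ i, lam i ^ 2 * w i := by
  rw [Finset.mul_sum]
  calc ∑ j ∈ s, lam a ^ 2 * w j ≤ ∑ j ∈ s, lam j ^ 2 * w j := by
        refine Finset.sum_le_sum fun j hj => mul_le_mul_of_nonneg_right ?_ (hw j)
        exact sq_le_sq.mpr (hlam (hs j hj))
    _ ≤ ∑ i, lam i ^ 2 * w i :=
        Finset.sum_le_sum_of_subset_of_nonneg (Finset.subset_univ _)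
          fun i _ _ => mul_nonneg (sq_nonneg _) (hw i)

/-- Eigenspace localization bound:
`‖U₁ᵀX⊥‖_F² ≤ s²‖M‖_F²/λₖ² − ∑ᵢ ‖Mχᵢ − (χᵢᵀMχᵢ)χᵢ‖₂²/λₖ²`. -/
theorem eigenspace_sin_theta_bound
    (n k m : ℕ) (hk0 : 0 < k) (hkm : k + m = n)
    (U : Matrix (Fin n) (Fin n) ℝ) (hU : Uᵀ * U = 1)
    (lam : Fin n → ℝ)
    (hmono : ∀ i j : Fin n, i ≤ j → |lam j| ≤ |lam i|)
    (M : Matrix (Fin n) (Fin n) ℝ)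
    (hM : M = U * Matrix.diagonal lam * Uᵀ)
    (lamk : ℝ) (hlamk : lamk = lam ⟨k - 1, by omega⟩) (hlamk0 : lamk ≠ 0)
    (U1 : Matrix (Fin n) (Fin k) ℝ)
    (hU1 : ∀ (i : Fin n) (j : Fin k), U1 i j = U i (Fin.castLE (by omega) j))
    (X : Matrix (Fin n) (Fin k) ℝ) (Xp : Matrix (Fin n) (Fin m) ℝ)
    (hX : Xᵀ * X = 1) (hXXp : Xᵀ * Xp = 0)
    (hcomplete : X * Xᵀ + Xp * Xpᵀ = 1)
    (q : Fin k → ℝ)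
    (H : Matrix (Fin n) (Fin n) ℝ)
    (hH : H = ∑ i : Fin k, q i • vecMulVec (fun r => X r i) (fun r => X r i))
    (s : ℝ)
    (hs : s = Real.sqrt (∑ r, ∑ c, (M r c - H r c) ^ 2) /
              Real.sqrt (∑ r, ∑ c, (M r c) ^ 2)) :
    ∑ r, ∑ c, ((U1ᵀ * Xp) r c) ^ 2 ≤
      s ^ 2 * (∑ r, ∑ c, (M r c) ^ 2) / lamk ^ 2 -
        ∑ i : Fin k,
          (∑ r, ((M *ᵥ fun r' => X r' i) r - q i * X r i) ^ 2) / lamk ^ 2 := by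
  have hkn : k ≤ n := by omega
  rw [sum_smul_vecMulVec_col] at hH
  set W := Uᵀ * Xp
  set kth : Fin n := ⟨k - 1, by omega⟩
  have hlamk_le : lamk ^ 2 ≤ ∑ r, ∑ c, M r c ^ 2 := by
    rw [hM, sum_sum_sq_spectral hU, hlamk]
    exact Finset.single_le_sum (fun i _ => sq_nonneg (lam i)) (Finset.mem_univ kth)
  have hsq : s ^ 2 * ∑ r, ∑ c, M r c ^ 2 = ∑ r, ∑ c, (M - H) r c ^ 2 := by
    rw [hs, div_pow, Real.sq_sqrt (by positivity), Real.sq_sqrt (by positivity),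
      div_mul_cancel₀ _ (lt_of_lt_of_le (by positivity) hlamk_le).ne']
    rfl
  have hresidual : ∑ r, ∑ c, (M - H) r c ^ 2 =
      ∑ i, ∑ r, ((M *ᵥ fun r' => X r' i) r - q i * X r i) ^ 2
        + ∑ j, lam j ^ 2 * ∑ c, W j c ^ 2 := by
    rw [hH, sum_sum_sq_sub_diagonal_conj M hX hXXp hcomplete, hM, sum_sum_sq_spectral_mul hU]
  have hLHS : ∑ r, ∑ c, (U1ᵀ * Xp) r c ^ 2 =
      ∑ j ∈ Finset.univ.map (Fin.castLEEmb hkn), ∑ c, W j c ^ 2 := by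
    rw [Finset.sum_map]
    simp only [W, mul_apply, transpose_apply, hU1]
    rfl
  have hkey : lamk ^ 2 * ∑ j ∈ Finset.univ.map (Fin.castLEEmb hkn), ∑ c, W j c ^ 2 ≤
      ∑ j, lam j ^ 2 * ∑ c, W j c ^ 2 :=
    hlamk ▸ sq_mul_sum_le_sum_sq_mul (fun i j h => hmono i j h) (fun j => by positivity)
      (by simp [kth, Fin.le_def]; omega)
  rw [← Finset.sum_div, div_sub_div_same, hsq, hresidual, add_sub_cancel_left,
    le_div_iff₀ (by positivity), mul_comm, hLHS]
  exact hkey
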